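/- Let M be a stochastic MDP over (S, A), let π be a policy, and let S_π ⊆ S and S^rch ⊆ S be arbitrary subsets; set S^rem = S_π \ S^rch. Define the Markov reward process M^π on state set S_π ∪ {s_⊤, s_⊥} with start state s_⊤ and absorbing state s_⊥ as follows: from s_⊤, the transition probability to a state s' ∈ S_π is the probability that a trajectory of M under π reaches s' without previously visiting any other state of S_π, and the transition probability to s_⊥ is the probability that the trajectory visits no state of S_π at all; from each s ∈ S_π ∩ S^rch lying in layer h, the transition probability to a state s' ∈ S_π lying in a strictly later layer is the probability that the Markov chain under π started at s at layer h reaches s' without visiting any other state of S_π in between, and the transition probability to s_⊥ is the probability that this chain finishes the episode without visiting another state of S_π; from each s ∈ S^rem and from s_⊥, the process transitions to s_⊥ with probability 1. Then for every s ∈ S^rem, the probability that the process M^π started at s_⊤ ever visits s equals d̄^π(s, S^rem), the probability that a trajectory of M under π reaches s without having visited any state of S^rem at any earlier time step. -/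

import Mathlib

open scoped ENNReal Classical

/-- A stochastic MDP over a layered state space `S : ℕ → Type` with action set `A`: an
initial distribution on layer `0` and transition kernels between consecutive layers. -/
structure StoMDP (S : ℕ → Type) (A : Type) where
  init : PMF (S 0)
  step : ∀ h : ℕ, S h → A → PMF (S (h + 1))

/-- `avoidProb M π Sbar h s k t` is the probability that the Markov chain induced by `π` in
`M`, started at state `s` at layer `h`, is at state `t` at layer `h + k` without having
visited any state of `Sbar` at the layers strictly between `h` and `h + k` (states are
recorded as pairs `⟨layer, state⟩`). -/
noncomputable def avoidProb {S : ℕ → Type} {A : Type} [∀ h, Fintype (S h)]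
    (M : StoMDP S A) (π : ∀ h : ℕ, S h → A) (Sbar : Set ((h : ℕ) × S h))
    (h : ℕ) (s : S h) : ∀ k : ℕ, S (h + k) → ℝ≥0∞
  | 0 => fun t => if t = s then 1 else 0
  | k + 1 => fun t =>
      ∑ x : S (h + k),
        avoidProb M π Sbar h s k x *
          (if k = 0 then 1 else if (⟨h + k, x⟩ : (i : ℕ) × S i) ∈ Sbar then 0 else 1) *
          M.step (h + k) x (π (h + k) x) t

/-- `initAvoid M π Sbar h s` is the probability that a trajectory of `M` under `π` reaches
the state `s` at layer `h` without having visited any state of `Sbar` at any strictly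
earlier layer (this is the quantity `d̄^π(s, Sbar)`). -/
noncomputable def initAvoid {S : ℕ → Type} {A : Type} [∀ h, Fintype (S h)]
    (M : StoMDP S A) (π : ∀ h : ℕ, S h → A) (Sbar : Set ((h : ℕ) × S h)) :
    ∀ h : ℕ, S h → ℝ≥0∞
  | 0 => fun s => M.init s
  | h + 1 => fun t =>
      ∑ x : S h,
        initAvoid M π Sbar h x *
          (if (⟨h, x⟩ : (i : ℕ) × S i) ∈ Sbar then 0 else 1) *
          M.step h x (π h x) t

/-- `tailProb H M π Sp h s`: the probability that the Markov chain under `π`, started at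
state `s` at layer `h`, finishes the episode (reaches the last layer `H - 1`) without
visiting any other state of `Sp` after layer `h`. -/
noncomputable def tailProb (H : ℕ) {S : ℕ → Type} {A : Type} [∀ h, Fintype (S h)]
    (M : StoMDP S A) (π : ∀ h : ℕ, S h → A) (Sp : Set ((h : ℕ) × S h))
    (h : ℕ) (s : S h) : ℝ≥0∞ :=
  ∑ x : S (h + (H - 1 - h)),
    avoidProb M π Sp h s (H - 1 - h) x *
      (if H - 1 - h = 0 then 1
       else if (⟨h + (H - 1 - h), x⟩ : (i : ℕ) × S i) ∈ Sp then 0 else 1)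

/-- The state set of the policy-specific Markov reward process `M^π`: the start state `s_⊤`
(`Sum.inl ()`), the internal states (`Sum.inr (Sum.inl q)`, used for the states of
`S_π`), and the absorbing end state `s_⊥` (`Sum.inr (Sum.inr ())`). -/
abbrev MrpState (S : ℕ → Type) : Type := Unit ⊕ ((h : ℕ) × S h) ⊕ Unit

/-- The transition kernel of the policy-specific Markov reward process `M^π` determined by
the MDP `M`, the policy `π`, the petal states `Sp` and the reachable states `Srch`:
* from `s_⊤` to `q ∈ Sp`: the probability that a trajectory under `π` reaches `q` without
  previously visiting any other state of `Sp`; from `s_⊤` to `s_⊥`: the probability that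
  the trajectory visits no state of `Sp` at all;
* from `q ∈ Sp ∩ Srch` to `q' ∈ Sp` at a strictly later layer: the probability that the
  chain under `π` started at `q` reaches `q'` without visiting any other state of `Sp` in
  between; from `q ∈ Sp ∩ Srch` to `s_⊥`: the probability that this chain finishes the
  episode without visiting another state of `Sp`;
* from every remaining state (in particular every `q ∈ Sp \ Srch`) and from `s_⊥`: to
  `s_⊥` with probability `1`. -/
noncomputable def mrpQ (H : ℕ) {S : ℕ → Type} {A : Type} [∀ h, Fintype (S h)]
    (M : StoMDP S A) (π : ∀ h : ℕ, S h → A) (Sp Srch : Set ((h : ℕ) × S h)) :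
    MrpState S → MrpState S → ℝ≥0∞
  | Sum.inl _, Sum.inl _ => 0
  | Sum.inl _, Sum.inr (Sum.inl q) =>
      if q ∈ Sp then initAvoid M π Sp q.1 q.2 else 0
  | Sum.inl _, Sum.inr (Sum.inr _) =>
      ∑ x : S (H - 1),
        initAvoid M π Sp (H - 1) x *
          (if (⟨H - 1, x⟩ : (i : ℕ) × S i) ∈ Sp then 0 else 1)
  | Sum.inr (Sum.inl _), Sum.inl _ => 0
  | Sum.inr (Sum.inl q), Sum.inr (Sum.inl q') =>
      if hq : q ∈ Sp ∧ q ∈ Srch ∧ q' ∈ Sp ∧ q.1 < q'.1 then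
        avoidProb M π Sp q.1 q.2 (q'.1 - q.1)
          (cast (congrArg S (Nat.add_sub_cancel' (Nat.le_of_lt hq.2.2.2))).symm q'.2)
      else 0
  | Sum.inr (Sum.inl q), Sum.inr (Sum.inr _) =>
      if q ∈ Sp ∧ q ∈ Srch then tailProb H M π Sp q.1 q.2 else 1
  | Sum.inr (Sum.inr _), Sum.inl _ => 0
  | Sum.inr (Sum.inr _), Sum.inr (Sum.inl _) => 0
  | Sum.inr (Sum.inr _), Sum.inr (Sum.inr _) => 1

/-- `hitProb Q target n x`: the probability that the Markov chain with transition kernel `Q`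
started at `x` visits the state `target` within `n` steps. -/
noncomputable def hitProb {X : Type} (Q : X → X → ℝ≥0∞) (target : X) : ℕ → X → ℝ≥0∞
  | 0 => fun x => if x = target then 1 else 0
  | n + 1 => fun x =>
      if x = target then 1 else ∑' y : X, Q x y * hitProb Q target n y


/-!
A trajectory of `M` that reaches `q` while avoiding `Sp \ Srch` either avoids all of `Sp` before
`q`, which is the direct transition `s_⊤ → q` of `M^π`, or has a first visit to `Sp` at some
`σ ∈ Sp ∩ Srch` strictly before `q`. Splitting at that first visit (a first-entrance
decomposition of `initAvoid` and `avoidProb`) gives exactly the one-step recursion of the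
probability that `M^π` hits `q`: `M^π` jumps from one state of `Sp` to the next with the
probability of the trajectory segment in between, and is absorbed at the other states of
`Sp \ Srch`. Layers strictly increase along `M^π`, so `H + 1` steps suffice.
-/

lemma hitProb_self {X : Type} (Q : X → X → ℝ≥0∞) (target : X) (n : ℕ) :
    hitProb Q target n target = 1 := by
  cases n <;> simp [hitProb]

lemma hitProb_succ_of_ne {X : Type} (Q : X → X → ℝ≥0∞) {target x : X} (hx : x ≠ target)
    (n : ℕ) : hitProb Q target (n + 1) x = ∑' y, Q x y * hitProb Q target n y :=
  if_neg hx

lemma ite_notMem_eq_add {α R : Type*} [AddMonoidWithOne R] {T U : Set α} (hTU : T ⊆ U) (z : α) :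
    (if z ∈ T then (0 : R) else 1) = (if z ∈ U then 0 else 1) + if z ∈ U \ T then 1 else 0 := by
  by_cases hT : z ∈ T
  · simp [hT, hTU hT]
  · by_cases hU : z ∈ U <;> simp [hT, hU]

namespace StoMDP

variable {S : ℕ → Type} {A : Type} [∀ h, Fintype (S h)]
  (M : StoMDP S A) (π : ∀ h : ℕ, S h → A)

noncomputable def killedStep (T : Set ((h : ℕ) × S h)) (m : ℕ) (v : S m → ℝ≥0∞)
    (t : S (m + 1)) : ℝ≥0∞ :=
  ∑ x : S m, v x * (if (⟨m, x⟩ : (i : ℕ) × S i) ∈ T then 0 else 1) * M.step m x (π m x) t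

/-- `avoidProb` with the target indexed by its absolute layer `m` rather than by the offset
`m - h` (junk value `0` for `m < h`). -/
noncomputable def avoidProbTo (T : Set ((h : ℕ) × S h)) (h : ℕ) (s : S h) (m : ℕ) (t : S m) :
    ℝ≥0∞ :=
  if e : h ≤ m then
    avoidProb M π T h s (m - h) (cast (congrArg S (Nat.add_sub_cancel' e).symm) t)
  else 0

section

variable (T : Set ((h : ℕ) × S h))

lemma avoidProbTo_add (h : ℕ) (s : S h) (k : ℕ) (t : S (h + k)) :
    avoidProbTo M π T h s (h + k) t = avoidProb M π T h s k t := by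
  have key : ∀ {k'} (e : k' = k) (t' : S (h + k')),
      avoidProb M π T h s k' t' = avoidProb M π T h s k (cast (congrArg (S <| h + ·) e) t') := by
    rintro _ rfl _; rfl
  rw [avoidProbTo, dif_pos (Nat.le_add_right h k), key (Nat.add_sub_cancel_left h k), cast_cast]
  rfl

lemma avoidProbTo_succ_self (h : ℕ) (s : S h) (t : S (h + 1)) :
    avoidProbTo M π T h s (h + 1) t = M.step h s (π h s) t := by
  rw [avoidProbTo_add M π T h s 1 t]
  simp [avoidProb]

lemma avoidProbTo_succ_of_lt {h m : ℕ} (hm : h < m) (s : S h) (t : S (m + 1)) :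
    avoidProbTo M π T h s (m + 1) t = M.killedStep π T m (avoidProbTo M π T h s m) t := by
  obtain ⟨k, rfl⟩ := Nat.exists_eq_add_of_lt hm
  refine (avoidProbTo_add M π T h s (k + 1 + 1) t).trans (Finset.sum_congr rfl fun x _ => ?_)
  rw [← avoidProbTo_add M π T h s (k + 1) x, if_neg (Nat.succ_ne_zero k)]
  rfl

lemma initAvoid_succ (m : ℕ) (t : S (m + 1)) :
    initAvoid M π T (m + 1) t = M.killedStep π T m (initAvoid M π T m) t :=
  rfl

end

/-- First-entrance decomposition: a path that avoids `T` either avoids `U ⊇ T` as well, or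
has a first visit to `U`, necessarily at a state of `U \ T`. -/
lemma eq_add_sum_firstEntrance {T U : Set ((h : ℕ) × S h)} (hTU : T ⊆ U) {h₀ : ℕ}
    {vT vU : ∀ m, S m → ℝ≥0∞} (h₀_eq : vT h₀ = vU h₀)
    (hT : ∀ m, h₀ ≤ m → ∀ t, vT (m + 1) t = M.killedStep π T m (vT m) t)
    (hU : ∀ m, h₀ ≤ m → ∀ t, vU (m + 1) t = M.killedStep π U m (vU m) t)
    {m : ℕ} (hm : h₀ ≤ m) (t : S m) :
    vT m t = vU m t + ∑ i ∈ Finset.Ico h₀ m, ∑ y : S i,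
      if (⟨i, y⟩ : (j : ℕ) × S j) ∈ U \ T then vU i y * avoidProbTo M π T i y m t else 0 := by
  induction m, hm using Nat.le_induction with
  | base => simp [h₀_eq]
  | succ m hm IH =>
    have h_split : ∀ x : S m, vT m x * (if (⟨m, x⟩ : (j : ℕ) × S j) ∈ T then 0 else 1) *
          M.step m x (π m x) t
        = vU m x * (if (⟨m, x⟩ : (j : ℕ) × S j) ∈ U then 0 else 1) * M.step m x (π m x) t
          + (if (⟨m, x⟩ : (j : ℕ) × S j) ∈ U \ T then vU m x * M.step m x (π m x) t else 0)
          + ∑ i ∈ Finset.Ico h₀ m, ∑ y : S i,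
              if (⟨i, y⟩ : (j : ℕ) × S j) ∈ U \ T then
                vU i y * (avoidProbTo M π T i y m x *
                  (if (⟨m, x⟩ : (j : ℕ) × S j) ∈ T then 0 else 1) * M.step m x (π m x) t)
              else 0 := by
      intro x
      rw [IH x, add_mul, add_mul]
      congr 1
      · rw [ite_notMem_eq_add hTU]
        split_ifs <;> ring
      · simp only [Finset.sum_mul]
        refine Finset.sum_congr rfl fun i _ => Finset.sum_congr rfl fun y _ => ?_
        split_ifs <;> simp [mul_assoc]
    rw [hT m hm, hU m hm, killedStep, killedStep, Finset.sum_congr rfl fun x _ => h_split x,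
      Finset.sum_add_distrib, Finset.sum_add_distrib, Finset.sum_Ico_succ_top hm, add_assoc,
      add_comm (∑ i ∈ Finset.Ico h₀ m, _)]
    congr 2
    · refine Finset.sum_congr rfl fun x _ => ?_
      rw [avoidProbTo_succ_self]
    · rw [Finset.sum_comm]
      refine Finset.sum_congr rfl fun i hi => ?_
      rw [Finset.sum_comm]
      refine Finset.sum_congr rfl fun y _ => ?_
      rw [avoidProbTo_succ_of_lt M π T (Finset.mem_Ico.mp hi).2, killedStep]
      split_ifs <;> simp [Finset.mul_sum]

lemma avoidProbTo_eq_add_sum {T U : Set ((h : ℕ) × S h)} (hTU : T ⊆ U) {h m : ℕ} (hm : h < m)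
    (s : S h) (t : S m) :
    avoidProbTo M π T h s m t = avoidProbTo M π U h s m t + ∑ i ∈ Finset.Ico (h + 1) m, ∑ y : S i,
      if (⟨i, y⟩ : (j : ℕ) × S j) ∈ U \ T then
        avoidProbTo M π U h s i y * avoidProbTo M π T i y m t
      else 0 :=
  M.eq_add_sum_firstEntrance π hTU
    (funext fun t => by rw [avoidProbTo_succ_self, avoidProbTo_succ_self])
    (fun _ hm => avoidProbTo_succ_of_lt M π T hm s) (fun _ hm => avoidProbTo_succ_of_lt M π U hm s)
    hm t

lemma initAvoid_eq_add_sum {T U : Set ((h : ℕ) × S h)} (hTU : T ⊆ U) (m : ℕ) (t : S m) :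
    initAvoid M π T m t = initAvoid M π U m t + ∑ i ∈ Finset.Ico 0 m, ∑ y : S i,
      if (⟨i, y⟩ : (j : ℕ) × S j) ∈ U \ T then
        initAvoid M π U i y * avoidProbTo M π T i y m t
      else 0 :=
  M.eq_add_sum_firstEntrance π (vT := initAvoid M π T) (vU := initAvoid M π U) hTU rfl
    (fun _ _ => initAvoid_succ M π T _)
    (fun _ _ => initAvoid_succ M π U _) (Nat.zero_le m) t

end StoMDP

abbrev MrpState.node {S : ℕ → Type} (σ : (h : ℕ) × S h) : MrpState S := Sum.inr (Sum.inl σ)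

abbrev MrpState.bot {S : ℕ → Type} : MrpState S := Sum.inr (Sum.inr ())

open MrpState

section MrpHitting

variable {S : ℕ → Type} {A : Type} [∀ h, Fintype (S h)] (H : ℕ) (M : StoMDP S A)
  (π : ∀ h : ℕ, S h → A) (Sp Srch : Set ((h : ℕ) × S h)) (q : (h : ℕ) × S h)

lemma mrpQ_apply_inl (x : MrpState S) : mrpQ H M π Sp Srch x (Sum.inl ()) = 0 := by
  rcases x with _ | _ | _ <;> rfl

lemma mrpQ_node_node (x σ : (h : ℕ) × S h) :
    mrpQ H M π Sp Srch (node x) (node σ)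
      = if x ∈ Sp ∧ x ∈ Srch ∧ σ ∈ Sp ∧ x.1 < σ.1 then
          M.avoidProbTo π Sp x.1 x.2 σ.1 σ.2 else 0 := by
  show dite _ _ _ = _
  split_ifs with hc
  · rw [StoMDP.avoidProbTo, dif_pos hc.2.2.2.le]
  · rfl

lemma hitProb_mrpQ_succ {x : MrpState S} (hx : x ≠ node q) (n : ℕ) :
    hitProb (mrpQ H M π Sp Srch) (node q) (n + 1) x
      = ∑' σ, mrpQ H M π Sp Srch x (node σ) * hitProb (mrpQ H M π Sp Srch) (node q) n (node σ)
        + mrpQ H M π Sp Srch x bot * hitProb (mrpQ H M π Sp Srch) (node q) n bot := by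
  rw [hitProb_succ_of_ne _ hx, ENNReal.summable.tsum_sum ENNReal.summable,
    ENNReal.summable.tsum_sum ENNReal.summable]
  simp [mrpQ_apply_inl]

lemma hitProb_mrpQ_bot (n : ℕ) : hitProb (mrpQ H M π Sp Srch) (node q) n bot = 0 := by
  induction n with
  | zero => simp [hitProb]
  | succ n IH =>
    rw [hitProb_mrpQ_succ H M π Sp Srch q (by simp), IH, mul_zero, add_zero]
    exact ENNReal.tsum_eq_zero.mpr fun σ => zero_mul _

lemma hitProb_mrpQ_node_of_notMem {x : (h : ℕ) × S h} (hx : x ∉ Srch) (hxq : x ≠ q) (n : ℕ) :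
    hitProb (mrpQ H M π Sp Srch) (node q) n (node x) = 0 := by
  cases n with
  | zero => simp [hitProb, hxq]
  | succ n =>
    rw [hitProb_mrpQ_succ H M π Sp Srch q (by simpa using hxq), hitProb_mrpQ_bot, mul_zero,
      add_zero]
    refine ENNReal.tsum_eq_zero.mpr fun σ => ?_
    rw [mrpQ_node_node, if_neg fun hc => hx hc.2.1, zero_mul]

lemma hitProb_mrpQ_node_of_layer_le (n : ℕ) {x : (h : ℕ) × S h} (hqx : q.1 ≤ x.1) (hxq : x ≠ q) :
    hitProb (mrpQ H M π Sp Srch) (node q) n (node x) = 0 := by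
  induction n generalizing x with
  | zero => simp [hitProb, hxq]
  | succ n IH =>
    rw [hitProb_mrpQ_succ H M π Sp Srch q (by simpa using hxq), hitProb_mrpQ_bot, mul_zero,
      add_zero]
    refine ENNReal.tsum_eq_zero.mpr fun σ => ?_
    rw [mrpQ_node_node]
    split_ifs with hc
    · rw [IH (by omega) (by rintro rfl; omega), mul_zero]
    · rw [zero_mul]

lemma hitProb_mrpQ_succ_eq_add_sum {x : MrpState S} (hx : x ≠ node q) (n : ℕ) :
    hitProb (mrpQ H M π Sp Srch) (node q) (n + 1) x
      = mrpQ H M π Sp Srch x (node q) + ∑ i ∈ Finset.range q.1, ∑ y : S i,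
          mrpQ H M π Sp Srch x (node ⟨i, y⟩) *
            hitProb (mrpQ H M π Sp Srch) (node q) n (node ⟨i, y⟩) := by
  have h_layer : ∀ y : S q.1, y ≠ q.2 →
      hitProb (mrpQ H M π Sp Srch) (node q) n (node ⟨q.1, y⟩) = 0 := fun y hy =>
    hitProb_mrpQ_node_of_layer_le H M π Sp Srch q n le_rfl
      fun e => hy (eq_of_heq (Sigma.mk.inj_iff.mp e).2)
  rw [hitProb_mrpQ_succ H M π Sp Srch q hx, hitProb_mrpQ_bot, mul_zero, add_zero,
    ENNReal.tsum_sigma', tsum_eq_sum (s := Finset.range (q.1 + 1)), Finset.sum_range_succ,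
    add_comm, tsum_fintype, Finset.sum_eq_single q.2 (fun y _ hy => by rw [h_layer y hy, mul_zero])
      (by simp), hitProb_self, mul_one]
  · simp only [tsum_fintype]
  · intro i hi
    rw [Finset.mem_range, not_lt] at hi
    refine ENNReal.tsum_eq_zero.mpr fun y => ?_
    rw [hitProb_mrpQ_node_of_layer_le H M π Sp Srch q n (Nat.le_of_succ_le hi)
      (ne_of_apply_ne Sigma.fst (Nat.lt_of_succ_le hi).ne'), mul_zero]

lemma hitProb_mrpQ_succ_eq_of_transitions {x : MrpState S} (hx : x ≠ node q) (hq : q ∈ Sp)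
    {h₀ : ℕ} (hh₀ : h₀ ≤ q.1) (v : ∀ i, S i → ℝ≥0∞)
    (hQ : ∀ σ, mrpQ H M π Sp Srch x (node σ) = if σ ∈ Sp ∧ h₀ ≤ σ.1 then v σ.1 σ.2 else 0)
    {n : ℕ} (hn : ∀ σ ∈ Sp, σ ∈ Srch → h₀ ≤ σ.1 → σ.1 < q.1 →
      hitProb (mrpQ H M π Sp Srch) (node q) n (node σ)
        = M.avoidProbTo π (Sp \ Srch) σ.1 σ.2 q.1 q.2) :
    hitProb (mrpQ H M π Sp Srch) (node q) (n + 1) x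
      = v q.1 q.2 + ∑ i ∈ Finset.Ico h₀ q.1, ∑ y : S i,
          if (⟨i, y⟩ : (j : ℕ) × S j) ∈ Sp \ (Sp \ Srch) then
            v i y * M.avoidProbTo π (Sp \ Srch) i y q.1 q.2
          else 0 := by
  rw [hitProb_mrpQ_succ_eq_add_sum H M π Sp Srch q hx, hQ, if_pos ⟨hq, hh₀⟩,
    ← Finset.sum_range_add_sum_Ico _ hh₀, Finset.sum_eq_zero (s := Finset.range h₀), zero_add]
  · refine congrArg _ (Finset.sum_congr rfl fun i hi => Finset.sum_congr rfl fun y _ => ?_)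
    obtain ⟨hi₀, hiq⟩ := Finset.mem_Ico.mp hi
    rw [hQ]
    by_cases hSp : (⟨i, y⟩ : (j : ℕ) × S j) ∈ Sp
    · by_cases hSrch : (⟨i, y⟩ : (j : ℕ) × S j) ∈ Srch
      · rw [if_pos ⟨hSp, hi₀⟩, hn _ hSp hSrch hi₀ hiq, if_pos ⟨hSp, fun h => h.2 hSrch⟩]
      · rw [hitProb_mrpQ_node_of_notMem H M π Sp Srch q hSrch (ne_of_apply_ne Sigma.fst hiq.ne),
          mul_zero, if_neg fun h => h.2 ⟨hSp, hSrch⟩]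
    · rw [if_neg fun h => hSp h.1, zero_mul, if_neg fun h => hSp h.1]
  · intro i hi
    refine Finset.sum_eq_zero fun y _ => ?_
    rw [hQ, if_neg fun h => (Finset.mem_range.mp hi).not_ge h.2, zero_mul]

lemma hitProb_mrpQ_node_eq_avoidProbTo (hq : q ∈ Sp \ Srch) (n : ℕ) {x : (h : ℕ) × S h}
    (hxSp : x ∈ Sp) (hxSrch : x ∈ Srch) (hxq : x.1 < q.1) (hn : q.1 ≤ x.1 + n) :
    hitProb (mrpQ H M π Sp Srch) (node q) n (node x)
      = M.avoidProbTo π (Sp \ Srch) x.1 x.2 q.1 q.2 := by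
  induction n generalizing x with
  | zero => omega
  | succ n IH =>
    have hx : x ≠ q := ne_of_apply_ne Sigma.fst hxq.ne
    rw [hitProb_mrpQ_succ_eq_of_transitions H M π Sp Srch q (by simpa using hx) hq.1 hxq
        (M.avoidProbTo π Sp x.1 x.2) (fun σ => by simp [mrpQ_node_node, hxSp, hxSrch])
        (fun σ hσSp hσSrch hσx hσq => IH hσSp hσSrch hσq (by omega)),
      M.avoidProbTo_eq_add_sum π Set.sdiff_subset hxq]
    -- the two sides differ only in the `Decidable` instances of the membership tests
    congr!

end MrpHitting

theorem mrp_visit_eq_dbar_general (H : ℕ) (S : ℕ → Type) (A : Type)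
    [∀ h, Fintype (S h)] (M : StoMDP S A) (π : ∀ h : ℕ, S h → A)
    (Sp Srch : Set ((h : ℕ) × S h)) (hSp : ∀ q ∈ Sp, q.1 < H)
    (q : (h : ℕ) × S h) (hq : q ∈ Sp \ Srch) :
    hitProb (mrpQ H M π Sp Srch) (Sum.inr (Sum.inl q)) (H + 1) (Sum.inl ())
      = initAvoid M π (Sp \ Srch) q.1 q.2 := by
  have hqH : q.1 < H := hSp q hq.1
  have h_top : ∀ σ, mrpQ H M π Sp Srch (Sum.inl ()) (node σ)
      = if σ ∈ Sp ∧ 0 ≤ σ.1 then initAvoid M π Sp σ.1 σ.2 else 0 := fun σ => by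
    simp only [Nat.zero_le, and_true]
    rfl
  rw [hitProb_mrpQ_succ_eq_of_transitions H M π Sp Srch q (by simp) hq.1 (Nat.zero_le _)
      (initAvoid M π Sp) h_top
      (fun σ hσSp hσSrch _ hσq => hitProb_mrpQ_node_eq_avoidProbTo H M π Sp Srch q hq H
        hσSp hσSrch hσq (by omega)),
    M.initAvoid_eq_add_sum π Set.sdiff_subset]
  congr!

/-- Let `M` be a stochastic MDP, `π` a policy, and `Sp`, `Srch` arbitrary
sets of states (all lying in layers `< H`); set `Srem = Sp \ Srch`.  In the
policy-specific Markov reward process `M^π` defined by the kernel `mrpQ` above (with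
start state `s_⊤`, absorbing state `s_⊥`, and at most `H + 1` transitions per episode),
the probability that the process started at `s_⊤` ever visits a state `q ∈ Srem` equals
`d̄^π(q, Srem)`: the probability that a trajectory of `M` under `π` reaches `q` without
having visited any state of `Srem` at any earlier time step. -/
theorem mrp_visit_eq_dbar (H : ℕ) (hH : 1 ≤ H) (S : ℕ → Type) (A : Type)
    [∀ h, Fintype (S h)] (M : StoMDP S A) (π : ∀ h : ℕ, S h → A)
    (Sp Srch : Set ((h : ℕ) × S h)) (hSp : ∀ q ∈ Sp, q.1 < H)
    (q : (h : ℕ) × S h) (hq : q ∈ Sp \ Srch) :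
    hitProb (mrpQ H M π Sp Srch) (Sum.inr (Sum.inl q)) (H + 1) (Sum.inl ())
      = initAvoid M π (Sp \ Srch) q.1 q.2 :=
  mrp_visit_eq_dbar_general H S A M π Sp Srch hSp q hq
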